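/- Let b_k (k ≥ 0) be the number of closed walks of length 2k at the root of the (q+1)-regular tree (allowing intermediate visits to the root, with b_0 = 1). Then for real s with |s| < 1/(q+1), Σ_{k≥0} b_k s^{2k} = ((q+1)√(1−4qs²) − q + 1) / (2(1 − (q+1)² s²)). -/

import Mathlib

/-- Vertices of the infinite (q+1)-regular tree: reduced words over an alphabet of
q+1 letters, i.e. lists with no two consecutive letters equal. The root is the
empty word; each vertex is adjacent to its extensions by one letter and (if
nonempty) to the word with its first letter removed, giving degree q+1. -/
def TreeV (q : ℕ) : Type := {l : List (Fin (q + 1)) // l.Chain' (· ≠ ·)}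

/-- The root of the (q+1)-regular tree. -/
def treeRoot (q : ℕ) : TreeV q := ⟨[], List.isChain_nil⟩

/-- Adjacency in the (q+1)-regular tree: one word is obtained from the other by
prepending a single letter. -/
def treeAdj (q : ℕ) (x y : TreeV q) : Prop :=
  (∃ a : Fin (q + 1), y.val = a :: x.val) ∨ (∃ a : Fin (q + 1), x.val = a :: y.val)

/-- Number of closed walks of length n in the (q+1)-regular tree starting and
ending at the root. -/
noncomputable def closedWalkCount (q n : ℕ) : ℕ :=
  Nat.card {f : Fin (n + 1) → TreeV q //
    f 0 = treeRoot q ∧ f (Fin.last n) = treeRoot q ∧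
    ∀ i : Fin n, treeAdj q (f i.castSucc) (f i.succ)}

/-- Number of closed walks of length 2k at the root of the (q+1)-regular tree that
do not visit the root at any intermediate step. -/
noncomputable def nonReturningWalkCount (q k : ℕ) : ℕ :=
  Nat.card {f : Fin (2 * k + 1) → TreeV q //
    f 0 = treeRoot q ∧ f (Fin.last (2 * k)) = treeRoot q ∧
    (∀ i : Fin (2 * k), treeAdj q (f i.castSucc) (f i.succ)) ∧
    ∀ i : Fin (2 * k + 1), i ≠ 0 → i ≠ Fin.last (2 * k) → f i ≠ treeRoot q}

/-! The number of walks of length `n` from the root to a vertex depends only on the depth `d` of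
that vertex; call it `c n d`. Splitting off the last step gives `c (n+1) 0 = (q+1) c n 1` and
`c (n+1) (d+1) = c n d + q c n (d+2)`, so the series `U d = ∑ₙ c n d sⁿ` satisfy
`U 0 = 1 + (q+1) s U 1` and `U (d+1) = s U d + q s U (d+2)`. Since `c n d ≤ (q+1)ⁿ`, `U` is
bounded in `d`, and a bounded solution of this recurrence is geometric with ratio the small root
`w = 2s / (1 + √(1 - 4qs²))` of `q s w² - w + s = 0`. Hence `U 0 = 1 / (1 - (q+1) s w)`, and
`U 0` is the series of the theorem because there are no closed walks of odd length. -/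

open Filter Topology

def RootWalks (q n : ℕ) (x : TreeV q) : Type :=
  {f : Fin (n + 1) → TreeV q //
    f 0 = treeRoot q ∧ f (Fin.last n) = x ∧ ∀ i : Fin n, treeAdj q (f i.castSucc) (f i.succ)}

def rootWalksSuccEquiv (q n : ℕ) (x : TreeV q) :
    RootWalks q (n + 1) x ≃ Σ y : {y // treeAdj q y x}, RootWalks q n y where
  toFun w := ⟨⟨w.1 (Fin.last n).castSucc, by simpa [w.2.2.1] using w.2.2.2 (Fin.last n)⟩,
    ⟨Fin.init w.1, w.2.1, rfl, fun i => by simpa [Fin.init] using w.2.2.2 i.castSucc⟩⟩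
  invFun p := ⟨Fin.snoc p.2.1 x, by simpa using p.2.2.1, by simp, fun i => by
    induction i using Fin.lastCases with
    | last => simpa [p.2.2.2.1] using p.1.2
    | cast j =>
      rw [Fin.succ_castSucc, Fin.snoc_castSucc, Fin.snoc_castSucc]
      exact p.2.2.2.2 j⟩
  left_inv w := Subtype.ext <| by
    conv_rhs => rw [← Fin.snoc_init_self w.1, w.2.2.1]
  right_inv p := Sigma.subtype_ext (Subtype.ext <| by simpa using p.2.2.2.1)
    (Fin.init_snoc (α := fun _ => TreeV q) x p.2.1)

def rootNeighbourEquiv (q : ℕ) : {y // treeAdj q y (treeRoot q)} ≃ Fin (q + 1) where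
  toFun y := y.1.1.headI
  invFun a := ⟨⟨[a], List.isChain_singleton a⟩, Or.inr ⟨a, rfl⟩⟩
  left_inv := by
    rintro ⟨⟨y, _⟩, ⟨a, ha⟩ | ⟨a, ha⟩⟩
    · cases ha
    · cases ha
      rfl
  right_inv _ := rfl

lemma List.cons_cons_ne_self {α : Type*} (a b : α) (t : List α) : a :: b :: t ≠ t :=
  fun e => by have := congrArg List.length e; simp at this; omega

def consNeighbourEquiv (q : ℕ) (b : Fin (q + 1)) (t : List (Fin (q + 1)))
    (h : (b :: t).IsChain (· ≠ ·)) :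
    {y // treeAdj q y ⟨b :: t, h⟩} ≃ Option {a : Fin (q + 1) // a ≠ b} where
  toFun y := if hy : y.1.1 = t then none else some ⟨y.1.1.headI, by
    obtain ⟨⟨y, hyc⟩, ⟨a, ha⟩ | ⟨a, ha⟩⟩ := y
    · cases ha; exact absurd rfl hy
    · cases ha; exact (List.isChain_cons_cons.mp hyc).1⟩
  invFun
    | none => ⟨⟨t, h.tail⟩, Or.inl ⟨b, rfl⟩⟩
    | some a => ⟨⟨a.1 :: b :: t, List.isChain_cons_cons.mpr ⟨a.2, h⟩⟩, Or.inr ⟨a, rfl⟩⟩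
  left_inv := by
    rintro ⟨⟨y, hyc⟩, ⟨a, ha⟩ | ⟨a, ha⟩⟩
    · cases ha; simp
    · cases ha; simp [List.cons_cons_ne_self]
  right_inv := by
    rintro (_ | ⟨a, ha⟩)
    · simp
    · simp [List.cons_cons_ne_self]

instance finite_neighbours (q : ℕ) (x : TreeV q) : Finite {y // treeAdj q y x} := by
  obtain ⟨_ | ⟨b, t⟩, h⟩ := x
  · exact Finite.of_equiv _ (rootNeighbourEquiv q).symm
  · exact Finite.of_equiv _ (consNeighbourEquiv q b t h).symm

instance subsingleton_rootWalks_zero (q : ℕ) (x : TreeV q) : Subsingleton (RootWalks q 0 x) :=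
  ⟨fun v w => Subtype.ext <| funext fun i => by rw [Fin.fin_one_eq_zero i, v.2.1, w.2.1]⟩

instance finite_rootWalks (q n : ℕ) (x : TreeV q) : Finite (RootWalks q n x) := by
  induction n generalizing x with
  | zero => infer_instance
  | succ n ih => exact Finite.of_equiv _ (rootWalksSuccEquiv q n x).symm

def depthWalkCount (q : ℕ) : ℕ → ℕ → ℕ
  | 0, 0 => 1
  | 0, _ + 1 => 0
  | n + 1, 0 => (q + 1) * depthWalkCount q n 1
  | n + 1, d + 1 => depthWalkCount q n d + q * depthWalkCount q n (d + 2)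

theorem card_rootWalks (q n : ℕ) (x : TreeV q) :
    Nat.card (RootWalks q n x) = depthWalkCount q n x.1.length := by
  induction n generalizing x with
  | zero =>
    obtain ⟨_ | ⟨b, t⟩, h⟩ := x
    · change Nat.card (RootWalks q 0 (treeRoot q)) = 1
      have : Nonempty (RootWalks q 0 (treeRoot q)) := ⟨fun _ => treeRoot q, rfl, rfl, Fin.elim0⟩
      exact Nat.card_unique
    · have : IsEmpty (RootWalks q 0 ⟨b :: t, h⟩) := ⟨fun w => by cases w.2.1.symm.trans w.2.2.1⟩
      exact Nat.card_of_isEmpty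
  | succ n ih =>
    obtain ⟨_ | ⟨b, t⟩, h⟩ := x
    · change Nat.card (RootWalks q (n + 1) (treeRoot q)) = (q + 1) * depthWalkCount q n 1
      rw [Nat.card_congr ((rootWalksSuccEquiv q n _).trans
        ((rootNeighbourEquiv q).sigmaCongrLeft' (β := fun y => RootWalks q n y.1))),
        Nat.card_sigma, Finset.sum_congr rfl fun a _ => (ih _ : _ = depthWalkCount q n 1)]
      simp
    · rw [Nat.card_congr ((rootWalksSuccEquiv q n _).trans
        ((consNeighbourEquiv q b t h).sigmaCongrLeft' (β := fun y => RootWalks q n y.1))),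
        Nat.card_sigma, Fintype.sum_option, ih, Finset.sum_congr rfl fun a _ => ih _]
      simp [depthWalkCount, consNeighbourEquiv, Fintype.card_subtype_compl]

theorem depthWalkCount_eq_zero_of_odd (q : ℕ) :
    ∀ n d, Odd (n + d) → depthWalkCount q n d = 0
  | 0, 0, h => absurd h (by decide)
  | 0, _ + 1, _ => rfl
  | n + 1, 0, h => by
    rw [depthWalkCount, depthWalkCount_eq_zero_of_odd q n 1 (by simpa using h), mul_zero]
  | n + 1, d + 1, h => by
    rw [depthWalkCount, depthWalkCount_eq_zero_of_odd q n d (by grind),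
      depthWalkCount_eq_zero_of_odd q n (d + 2) (by grind), mul_zero, add_zero]

theorem depthWalkCount_le (q : ℕ) : ∀ n d, depthWalkCount q n d ≤ (q + 1) ^ n
  | 0, 0 => le_rfl
  | 0, _ + 1 => Nat.zero_le _
  | n + 1, 0 => by
    rw [depthWalkCount, pow_succ']
    exact Nat.mul_le_mul_left _ (depthWalkCount_le q n 1)
  | n + 1, d + 1 => by
    rw [depthWalkCount, pow_succ', add_mul, one_mul, add_comm]
    exact Nat.add_le_add (Nat.mul_le_mul_left _ (depthWalkCount_le q n (d + 2)))
      (depthWalkCount_le q n d)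

theorem eq_zero_of_bounded_of_eq_mul_succ {𝕜 : Type*} [NormedField 𝕜] {g : ℕ → 𝕜} {c : 𝕜}
    {M : ℝ} (hc : ‖c‖ < 1) (hg : ∀ d, ‖g d‖ ≤ M) (hrec : ∀ d, g d = c * g (d + 1)) :
    g 0 = 0 := by
  have hpow (d : ℕ) : g 0 = c ^ d * g d := by
    induction d with
    | zero => rw [pow_zero, one_mul]
    | succ d ih => rw [ih, hrec d, pow_succ, mul_assoc]
  have hlim : Tendsto (fun d => ‖c‖ ^ d * M) atTop (𝓝 0) := by
    simpa using (tendsto_pow_atTop_nhds_zero_of_lt_one (norm_nonneg c) hc).mul_const M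
  refine norm_le_zero_iff.mp (ge_of_tendsto' hlim fun d => ?_)
  rw [hpow d, norm_mul, norm_pow]
  exact mul_le_mul_of_nonneg_left (hg d) (by positivity)

/-- `hb` says that the other root `1 / b - w` of `b X² - X + a` has norm `> 1`, so that no bounded
solution of the recurrence has a component along it. -/
theorem eq_mul_of_bounded_of_recurrence {𝕜 : Type*} [NormedField 𝕜] {U : ℕ → 𝕜} {a b w : 𝕜}
    {M : ℝ} (hw : b * w ^ 2 - w + a = 0) (hb : ‖b‖ < ‖1 - b * w‖) (hU : ∀ d, ‖U d‖ ≤ M)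
    (hrec : ∀ d, U (d + 1) = a * U d + b * U (d + 2)) : U 1 = w * U 0 := by
  have hbw : 1 - b * w ≠ 0 := norm_pos_iff.mp ((norm_nonneg b).trans_lt hb)
  set g : ℕ → 𝕜 := fun d => U (d + 1) - w * U d
  have hg : ∀ d, ‖g d‖ ≤ M + ‖w‖ * M := fun d =>
    (norm_sub_le _ _).trans (add_le_add (hU _) (by rw [norm_mul]; gcongr; exact hU d))
  have hgrec (d : ℕ) : g d = b / (1 - b * w) * g (d + 1) := by
    rw [div_mul_eq_mul_div, eq_div_iff hbw]
    linear_combination U d * hw + hrec d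
  have hc : ‖b / (1 - b * w)‖ < 1 := by
    rwa [norm_div, div_lt_one ((norm_nonneg b).trans_lt hb)]
  simpa [g, sub_eq_zero] using eq_zero_of_bounded_of_eq_mul_succ hc hg hgrec

noncomputable def depthGenFun (q : ℕ) (s : ℝ) (d : ℕ) : ℝ :=
  ∑' n, (depthWalkCount q n d : ℝ) * s ^ n

section depthGenFun

variable {q : ℕ} {s : ℝ}

theorem norm_depthWalkCount_mul_pow_le (n d : ℕ) :
    ‖(depthWalkCount q n d : ℝ) * s ^ n‖ ≤ (((q : ℝ) + 1) * |s|) ^ n := by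
  rw [norm_mul, norm_pow, Real.norm_natCast, Real.norm_eq_abs, mul_pow]
  gcongr
  exact_mod_cast depthWalkCount_le q n d

theorem summable_depthWalkCount_mul_pow (hs : ((q : ℝ) + 1) * |s| < 1) (d : ℕ) :
    Summable fun n => (depthWalkCount q n d : ℝ) * s ^ n :=
  .of_norm_bounded (summable_geometric_of_lt_one (by positivity) hs)
    (norm_depthWalkCount_mul_pow_le · d)

theorem norm_depthGenFun_le (hs : ((q : ℝ) + 1) * |s| < 1) (d : ℕ) :
    ‖depthGenFun q s d‖ ≤ (1 - ((q : ℝ) + 1) * |s|)⁻¹ :=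
  tsum_of_norm_bounded (hasSum_geometric_of_lt_one (by positivity) hs)
    (norm_depthWalkCount_mul_pow_le · d)

theorem depthGenFun_zero (hs : ((q : ℝ) + 1) * |s| < 1) :
    depthGenFun q s 0 = 1 + (q + 1) * s * depthGenFun q s 1 := by
  rw [depthGenFun, (summable_depthWalkCount_mul_pow hs 0).tsum_eq_zero_add, depthGenFun,
    ← tsum_mul_left]
  congr 1
  · simp [depthWalkCount]
  · exact tsum_congr fun n => by rw [depthWalkCount]; push_cast; ring

theorem depthGenFun_succ (hs : ((q : ℝ) + 1) * |s| < 1) (d : ℕ) :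
    depthGenFun q s (d + 1) = s * depthGenFun q s d + q * s * depthGenFun q s (d + 2) := by
  rw [depthGenFun, (summable_depthWalkCount_mul_pow hs (d + 1)).tsum_eq_zero_add, depthGenFun,
    depthGenFun, ← tsum_mul_left, ← tsum_mul_left,
    ← (summable_depthWalkCount_mul_pow hs d).mul_left s |>.tsum_add
      ((summable_depthWalkCount_mul_pow hs (d + 2)).mul_left _)]
  simp only [depthWalkCount, CharP.cast_eq_zero, zero_mul, zero_add]
  exact tsum_congr fun n => by push_cast; ring

theorem sq_mul_sq_lt_one (hs : ((q : ℝ) + 1) * |s| < 1) : ((q : ℝ) + 1) ^ 2 * s ^ 2 < 1 := by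
  rw [← sq_abs s, ← mul_pow]
  exact pow_lt_one₀ (by positivity) hs two_ne_zero

theorem one_sub_four_mul_sq_pos (hs : ((q : ℝ) + 1) * |s| < 1) : 0 < 1 - 4 * q * s ^ 2 := by
  nlinarith [sq_mul_sq_lt_one hs, sq_nonneg ((q : ℝ) - 1), sq_nonneg s]

theorem depthGenFun_one (hs : ((q : ℝ) + 1) * |s| < 1) :
    depthGenFun q s 1 = 2 * s / (1 + √(1 - 4 * q * s ^ 2)) * depthGenFun q s 0 := by
  set r := √(1 - 4 * q * s ^ 2)
  have hr2 : r ^ 2 = 1 - 4 * q * s ^ 2 := Real.sq_sqrt (one_sub_four_mul_sq_pos hs).le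
  have hr : 0 ≤ r := Real.sqrt_nonneg _
  clear_value r
  refine eq_mul_of_bounded_of_recurrence (a := s) (b := q * s) ?_ ?_ (norm_depthGenFun_le hs)
    (depthGenFun_succ hs)
  · field_simp
    linear_combination s * hr2
  · have h : 1 - q * s * (2 * s / (1 + r)) = (1 + r) / 2 := by
      field_simp
      linear_combination -hr2
    rw [h, Real.norm_eq_abs, Real.norm_eq_abs, abs_mul, Nat.abs_cast,
      abs_of_pos (show 0 < (1 + r) / 2 by positivity)]
    by_contra! hle
    -- then `(2 q |s| - 1)² - r² = 4 q |s| ((q + 1) |s| - 1)` would be both `≥ 0` and `< 0`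
    have hsq : r ^ 2 ≤ (2 * q * |s| - 1) ^ 2 := by gcongr; linarith
    nlinarith [sq_abs s, mul_pos (by linarith : (0 : ℝ) < q * |s|)
      (by linarith : 0 < 1 - (q + 1) * |s|)]

theorem depthGenFun_zero_eq (hs : ((q : ℝ) + 1) * |s| < 1) :
    depthGenFun q s 0 = (((q : ℝ) + 1) * √(1 - 4 * q * s ^ 2) - q + 1) /
        (2 * (1 - ((q : ℝ) + 1) ^ 2 * s ^ 2)) := by
  have h := depthGenFun_zero hs
  rw [depthGenFun_one hs] at h
  set r := √(1 - 4 * q * s ^ 2)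
  have hr2 : r ^ 2 = 1 - 4 * q * s ^ 2 := Real.sq_sqrt (one_sub_four_mul_sq_pos hs).le
  have hr : 0 ≤ r := Real.sqrt_nonneg _
  clear_value r
  field_simp at h
  rw [eq_div_iff (by linarith [sq_mul_sq_lt_one hs])]
  refine mul_right_cancel₀ (by positivity : 1 + r ≠ 0) ?_
  linear_combination ((q + 1) * r - q + 1) * h - (q + 1) * depthGenFun q s 0 * hr2

end depthGenFun

theorem closedWalkCount_eq_depthWalkCount (q n : ℕ) :
    closedWalkCount q n = depthWalkCount q n 0 :=
  card_rootWalks q n (treeRoot q)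

theorem gen_fun_closed_walks_general (q : ℕ) (s : ℝ) (hs : |s| < 1 / ((q : ℝ) + 1)) :
    ∑' k : ℕ, (closedWalkCount q (2 * k) : ℝ) * s ^ (2 * k) =
      (((q : ℝ) + 1) * Real.sqrt (1 - 4 * q * s ^ 2) - q + 1) /
        (2 * (1 - ((q : ℝ) + 1) ^ 2 * s ^ 2)) := by
  have hs' : ((q : ℝ) + 1) * |s| < 1 := by rwa [lt_div_iff₀' (by positivity)] at hs
  have hodd : (Function.support fun n => (depthWalkCount q n 0 : ℝ) * s ^ n) ⊆
      Set.range (2 * ·) := fun n hn => by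
    obtain ⟨k, rfl | rfl⟩ := Nat.even_or_odd' n
    · exact ⟨k, rfl⟩
    · exact absurd (by simp [depthWalkCount_eq_zero_of_odd q _ 0 (odd_two_mul_add_one k)]) hn
  simp_rw [closedWalkCount_eq_depthWalkCount]
  rw [(mul_right_injective₀ two_ne_zero).tsum_eq hodd, ← depthGenFun, depthGenFun_zero_eq hs']

/-- With b_k the number of closed walks of length 2k at the root of
the (q+1)-regular tree (intermediate visits to the root allowed, b_0 = 1), for
real s with |s| < 1/(q+1),
Σ_{k≥0} b_k s^{2k} = ((q+1)√(1−4qs²) − q + 1) / (2(1 − (q+1)² s²)). -/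
theorem gen_fun_closed_walks (q : ℕ) (hq : 1 ≤ q) (s : ℝ) (hs : |s| < 1 / ((q : ℝ) + 1)) :
    ∑' k : ℕ, (closedWalkCount q (2 * k) : ℝ) * s ^ (2 * k) =
      (((q : ℝ) + 1) * Real.sqrt (1 - 4 * q * s ^ 2) - q + 1) /
        (2 * (1 - ((q : ℝ) + 1) ^ 2 * s ^ 2)) :=
  gen_fun_closed_walks_general q s hs
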